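/- Let A be an n×n complex matrix with eigenvalues λ_1,...,λ_n (ordered with |λ_1| ≥ ... ≥ |λ_n|) and singular values σ_1 ≥ ... ≥ σ_n. Then ∏_{k=1}^n (1 + |λ_k|) ≤ ∏_{k=1}^n (1 + σ_k). -/

import Mathlib

/-!
Schur triangulation writes `A = U T Uᴴ` with `U` unitary and `T` upper triangular, whose diagonal
carries the eigenvalues. Multiplying each row of `T` by a unit scalar turns the diagonal into
`|λ_k|`, so `∏ (1 + |λ_k|) = |det (1 + W A)|` for a unitary `W`. Hadamard's inequality in an
orthonormal eigenbasis `v_k` of `AᴴA` bounds this by `∏ ‖v_k + W A v_k‖ ≤ ∏ (1 + ‖A v_k‖)`, and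
`‖A v_k‖ = σ_k`.
-/

open Matrix Module InnerProductSpace Polynomial

section Hadamard

variable {𝕜 E : Type*} [RCLike 𝕜] [NormedAddCommGroup E] [InnerProductSpace 𝕜 E]

theorem OrthonormalBasis.norm_det_le_prod_norm {ι : Type*} [Fintype ι] [DecidableEq ι]
    (b : OrthonormalBasis ι 𝕜 E) (v : ι → E) : ‖b.toBasis.det v‖ ≤ ∏ i, ‖v i‖ := by
  have : FiniteDimensional 𝕜 E := b.toBasis.finiteDimensional_of_finite
  -- Gram–Schmidt needs an ordering of `ι`; any one will do.
  let : LinearOrder ι := LinearOrder.lift' (Fintype.equivFin ι) (Equiv.injective _)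
  let : LocallyFiniteOrderBot ι := .ofIic' ι (fun a => {x | x ≤ a}) (by simp)
  let e := gramSchmidtOrthonormalBasis (finrank_eq_card_basis b.toBasis) v
  rw [b.toBasis.det.eq_smul_basis_det e.toBasis, AlternatingMap.smul_apply, smul_eq_mul, norm_mul,
    OrthonormalBasis.coe_toBasis, b.det_to_matrix_orthonormalBasis, one_mul]
  convert_to ‖∏ i, inner 𝕜 (e i) (v i)‖ ≤ _
  · convert congrArg norm (gramSchmidtOrthonormalBasis_det (finrank_eq_card_basis b.toBasis) v)
  rw [norm_prod]
  gcongr with i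
  simpa using norm_inner_le_norm (𝕜 := 𝕜) (e i) (v i)

theorem LinearMap.norm_det_le_prod_norm_apply {ι : Type*} [Fintype ι] [DecidableEq ι]
    (b : OrthonormalBasis ι 𝕜 E) (f : E →ₗ[𝕜] E) : ‖LinearMap.det f‖ ≤ ∏ i, ‖f (b i)‖ := by
  simpa [Basis.det_comp] using b.norm_det_le_prod_norm (f ∘ b)

end Hadamard

theorem LinearMap.exists_orthonormal_inner_apply_eq_zero_of_lt {E : Type*} [NormedAddCommGroup E]
    [InnerProductSpace ℂ E] [FiniteDimensional ℂ E] {n : ℕ} (hn : finrank ℂ E = n)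
    (T : E →ₗ[ℂ] E) :
    ∃ b : Fin n → E, Orthonormal ℂ b ∧ ∀ ⦃i j⦄, j < i → inner ℂ (b i) (T (b j)) = 0 := by
  induction n generalizing E with
  | zero => exact ⟨Fin.elim0, ⟨fun i => i.elim0, fun i => i.elim0⟩, fun i => i.elim0⟩
  | succ n ih =>
    have : Nontrivial E := Module.nontrivial_of_finrank_eq_succ hn
    have : Fact (finrank ℂ E = n + 1) := ⟨hn⟩
    obtain ⟨μ, hμ⟩ := Module.End.exists_eigenvalue (LinearMap.adjoint T)
    obtain ⟨v, hv⟩ := hμ.exists_hasEigenvector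
    set u : E := (‖v‖⁻¹ : ℂ) • v
    have hu : ‖u‖ = 1 := norm_smul_inv_norm hv.2
    have hTu : LinearMap.adjoint T u = μ • u := by
      rw [map_smul, hv.apply_eq_smul, smul_comm]
    -- `u` is an eigenvector of the adjoint, so its orthogonal complement is `T`-invariant.
    have hW : ∀ w ∈ (ℂ ∙ u)ᗮ, T w ∈ (ℂ ∙ u)ᗮ := by
      intro w hw
      rw [Submodule.mem_orthogonal_singleton_iff_inner_right] at hw ⊢
      rw [← LinearMap.adjoint_inner_left, hTu, inner_smul_left, hw, mul_zero]
    obtain ⟨c, hc, hcT⟩ := ih (Submodule.finrank_orthogonal_span_singleton (norm_ne_zero_iff.1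
      (hu.trans_ne one_ne_zero))) (T.restrict hW)
    refine ⟨Fin.snoc (fun i => (c i : E)) u, ?_, ?_⟩
    · rw [orthonormal_iff_ite] at hc ⊢
      have hcu : ∀ i, inner ℂ u (c i : E) = 0 := fun i =>
        Submodule.mem_orthogonal_singleton_iff_inner_right.1 (c i).2
      intro i j
      induction i using Fin.lastCases <;> induction j using Fin.lastCases <;>
        simp [hcu, inner_eq_zero_symm.1 (hcu _), inner_self_eq_norm_sq_to_K, hu, ← hc,
          Fin.castSucc_ne_last, (Fin.castSucc_ne_last _).symm]
    · intro i j hij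
      induction i using Fin.lastCases with
      | last =>
        induction j using Fin.lastCases with
        | last => exact absurd hij (lt_irrefl _)
        | cast j =>
          simpa using Submodule.mem_orthogonal_singleton_iff_inner_right.1 (hW _ (c j).2)
      | cast i =>
        induction j using Fin.lastCases with
        | last => exact absurd hij (not_lt.2 (Fin.le_last _))
        | cast j => simpa using hcT (Fin.castSucc_lt_castSucc_iff.1 hij)

theorem Matrix.exists_mem_unitaryGroup_isUpperTriangular {n : ℕ} (A : Matrix (Fin n) (Fin n) ℂ) :
    ∃ U ∈ unitaryGroup (Fin n) ℂ, (star U * A * U).IsUpperTriangular := by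
  obtain ⟨b, hb, hbA⟩ :=
    (toEuclideanLin A).exists_orthonormal_inner_apply_eq_zero_of_lt finrank_euclideanSpace_fin
  set U : Matrix (Fin n) (Fin n) ℂ := of fun k l => b l k
  have hU_apply (M : Matrix (Fin n) (Fin n) ℂ) (i j : Fin n) :
      (star U * M * U) i j = inner ℂ (b i) (toEuclideanLin M (b j)) := by
    simp only [U, mul_apply, PiLp.inner_apply, Finset.sum_mul, toLpLin_apply]
    rw [Finset.sum_comm]
    simp [mulVec, dotProduct, Finset.mul_sum, mul_comm, mul_left_comm, mul_assoc]
  refine ⟨U, ?_, fun i j hij => (hU_apply A i j).trans (hbA hij)⟩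
  rw [mem_unitaryGroup_iff', ← Matrix.mul_one (star U)]
  ext i j
  rw [hU_apply, toLpLin_one, LinearMap.id_apply, orthonormal_iff_ite.1 hb, one_apply]

theorem Matrix.IsUpperTriangular.roots_charpoly {n R : Type*} [Fintype n] [DecidableEq n]
    [LinearOrder n] [CommRing R] [IsDomain R] {M : Matrix n n R} (h : M.IsUpperTriangular) :
    M.charpoly.roots = Finset.univ.val.map fun i => M i i := by
  rw [charpoly_of_isUpperTriangular M h]
  simpa [Multiset.map_map, Function.comp_def] using
    roots_multiset_prod_X_sub_C (Finset.univ.val.map fun i => M i i)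

theorem Complex.exists_mem_unitary_mul_eq_norm (z : ℂ) : ∃ θ ∈ unitary ℂ, θ * z = ‖z‖ := by
  refine ⟨exp (-(arg z * I)), ?_, ?_⟩
  · rw [Unitary.mem_iff_star_mul_self, Complex.star_def, Complex.conj_mul', ← neg_mul, ← ofReal_neg,
      norm_exp_ofReal_mul_I, ofReal_one, one_pow]
  · calc exp (-(arg z * I)) * z = exp (-(arg z * I)) * (‖z‖ * exp (arg z * I)) := by
          rw [norm_mul_exp_arg_mul_I]
      _ = ‖z‖ := by rw [mul_left_comm, ← Complex.exp_add, neg_add_cancel, exp_zero, mul_one]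

namespace Matrix

variable {m 𝕜 : Type*} [Fintype m] [DecidableEq m] [RCLike 𝕜]

theorem charpoly_star_mul_mul_of_mem_unitaryGroup {U : Matrix m m 𝕜}
    (hU : U ∈ unitaryGroup m 𝕜) (M : Matrix m m 𝕜) : (star U * M * U).charpoly = M.charpoly := by
  rw [charpoly_mul_comm, ← mul_assoc, (mem_unitaryGroup_iff).1 hU, one_mul]

theorem det_star_mul_mul_of_mem_unitaryGroup {U : Matrix m m 𝕜}
    (hU : U ∈ unitaryGroup m 𝕜) (M : Matrix m m 𝕜) : (star U * M * U).det = M.det := by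
  rw [det_mul, det_mul, mul_comm, ← mul_assoc, ← det_mul, (mem_unitaryGroup_iff).1 hU, det_one,
    one_mul]

theorem diagonal_mem_unitaryGroup {θ : m → 𝕜} (hθ : ∀ k, θ k ∈ unitary 𝕜) :
    diagonal θ ∈ unitaryGroup m 𝕜 := by
  rw [mem_unitaryGroup_iff', star_eq_conjTranspose, diagonal_conjTranspose, diagonal_mul_diagonal,
    ← diagonal_one]
  exact congrArg diagonal (funext fun k => Unitary.star_mul_self_of_mem (hθ k))

theorem norm_toEuclideanLin_sq (A : Matrix m m 𝕜) (x : EuclideanSpace 𝕜 m) :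
    ‖toEuclideanLin A x‖ ^ 2 = RCLike.re (inner 𝕜 x (toEuclideanLin (Aᴴ * A) x)) := by
  rw [toLpLin_mul_same, LinearMap.comp_apply, toEuclideanLin_conjTranspose_eq_adjoint,
    LinearMap.adjoint_inner_right, ← inner_self_eq_norm_sq (𝕜 := 𝕜)]

theorem norm_toEuclideanLin_of_mem_unitaryGroup {W : Matrix m m 𝕜}
    (hW : W ∈ unitaryGroup m 𝕜) (x : EuclideanSpace 𝕜 m) : ‖toEuclideanLin W x‖ = ‖x‖ := by
  have h := W.norm_toEuclideanLin_sq x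
  rw [← star_eq_conjTranspose, (mem_unitaryGroup_iff').1 hW, toLpLin_one, LinearMap.id_apply,
    inner_self_eq_norm_sq] at h
  exact (sq_eq_sq₀ (norm_nonneg _) (norm_nonneg _)).1 h

theorem norm_toEuclideanLin_eigenvectorBasis (A : Matrix m m 𝕜) (k : m) :
    ‖toEuclideanLin A ((isHermitian_conjTranspose_mul_self A).eigenvectorBasis k)‖ =
      √((isHermitian_conjTranspose_mul_self A).eigenvalues k) := by
  rw [← Real.sqrt_sq (norm_nonneg _), norm_toEuclideanLin_sq, toLpLin_apply,
    IsHermitian.mulVec_eigenvectorBasis, WithLp.toLp_smul, WithLp.toLp_ofLp,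
    RCLike.real_smul_eq_coe_smul (K := 𝕜), inner_smul_right, inner_self_eq_norm_sq_to_K]
  simp

theorem norm_det_one_add_mul_le_prod (A W : Matrix m m 𝕜) (hW : W ∈ unitaryGroup m 𝕜) :
    ‖(1 + W * A).det‖ ≤ ∏ k, (1 + √((isHermitian_conjTranspose_mul_self A).eigenvalues k)) := by
  set v := (isHermitian_conjTranspose_mul_self A).eigenvectorBasis
  rw [← LinearMap.det_toLin (EuclideanSpace.basisFun m 𝕜).toBasis,
    ← toEuclideanLin_eq_toLin_orthonormal]
  refine (LinearMap.norm_det_le_prod_norm_apply v _).trans ?_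
  gcongr with k
  calc ‖toEuclideanLin (1 + W * A) (v k)‖ = ‖v k + toEuclideanLin W (toEuclideanLin A (v k))‖ := by
        simp [toLpLin_mul_same]
    _ ≤ ‖v k‖ + ‖toEuclideanLin W (toEuclideanLin A (v k))‖ := norm_add_le _ _
    _ = 1 + √((isHermitian_conjTranspose_mul_self A).eigenvalues k) := by
      rw [v.norm_eq_one, norm_toEuclideanLin_of_mem_unitaryGroup hW,
        norm_toEuclideanLin_eigenvectorBasis]

end Matrix

/-- For an `n×n` complex matrix `A` with eigenvalues `λ` (the roots of its characteristic
polynomial, with multiplicity) and singular values `σ k`,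
`∏ (1 + |λ k|) ≤ ∏ (1 + σ k)`. -/
theorem prod_one_add_abs_eigenvalues_le (n : ℕ) (A : Matrix (Fin n) (Fin n) ℂ)
    (σ : Fin n → ℝ)
    (hσ : ∀ k, σ k = Real.sqrt ((Matrix.isHermitian_conjTranspose_mul_self A).eigenvalues k)) :
    (A.charpoly.roots.map (fun z => 1 + ‖z‖)).prod ≤ ∏ k, (1 + σ k) := by
  obtain ⟨U, hU, hT⟩ := A.exists_mem_unitaryGroup_isUpperTriangular
  set T := star U * A * U
  choose θ hθ hθT using fun k => Complex.exists_mem_unitary_mul_eq_norm (T k k)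
  have hDT : (1 + diagonal θ * T).IsUpperTriangular :=
    blockTriangular_one.add ((blockTriangular_diagonal θ).mul hT)
  have hW : U * diagonal θ * star U ∈ unitaryGroup (Fin n) ℂ :=
    mul_mem (mul_mem hU (diagonal_mem_unitaryGroup hθ)) (Unitary.star_mem hU)
  calc (A.charpoly.roots.map (fun z => 1 + ‖z‖)).prod = ∏ k, (1 + ‖T k k‖) := by
        rw [← charpoly_star_mul_mul_of_mem_unitaryGroup hU, hT.roots_charpoly, Multiset.map_map]
        rfl
    _ = ‖(1 + diagonal θ * T).det‖ := by
        rw [det_of_isUpperTriangular hDT, norm_prod]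
        congr with k
        rw [Matrix.add_apply, one_apply_eq, diagonal_mul, hθT k, ← Complex.ofReal_one,
          ← Complex.ofReal_add, Complex.norm_real, Real.norm_of_nonneg (by positivity)]
    _ = ‖(star U * (1 + U * diagonal θ * star U * A) * U).det‖ := by
        simp [T, mul_add, add_mul, ← mul_assoc, (mem_unitaryGroup_iff').1 hU]
    _ = ‖(1 + U * diagonal θ * star U * A).det‖ := by
        rw [det_star_mul_mul_of_mem_unitaryGroup hU]
    _ ≤ ∏ k, (1 + σ k) := by
        simpa only [hσ] using norm_det_one_add_mul_le_prod A _ hW
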